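/- Let μ be a Borel probability measure on [0,∞) with m₁(μ) = 1 such that μ((t,∞)) ~ c t^{−α} as t → +∞ for some α ∈ (1,2) and c > 0. Then lim_{z→0−} (1/ψ_μ(z) − 1/z)/(−z)^{α−2} = c·πα/sin(πα); that is, 1/ψ_μ(z) = 1/z + c (πα/sin(πα)) (−z)^{α−2}(1+o(1)) as z → 0−. -/

import Mathlib

open MeasureTheory Filter Topology Real Set
set_option maxHeartbeats 1000000

/-- Real Beta integral equals Gamma quotient. -/
lemma realBeta_eq {p q : ℝ} (hp : 0 < p) (hq : 0 < q) :
    ∫ x in (0:ℝ)..1, x ^ (p-1) * (1-x) ^ (q-1)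
      = Real.Gamma p * Real.Gamma q / Real.Gamma (p+q) := by
  have key : Complex.Gamma p * Complex.Gamma q
      = Complex.Gamma (p+q) * Complex.betaIntegral p q := by
    have := Complex.Gamma_mul_Gamma_eq_betaIntegral
      (s := (p:ℂ)) (t := (q:ℂ)) (by simpa using hp) (by simpa using hq)
    simpa using this
  have hne : Complex.Gamma ((p:ℂ)+q) ≠ 0 :=
    Complex.Gamma_ne_zero_of_re_pos (by simp [add_pos hp hq])
  have hbeta : Complex.betaIntegral p q
      = Complex.Gamma p * Complex.Gamma q / Complex.Gamma ((p:ℂ)+q) := by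
    rw [eq_div_iff hne]; linear_combination -key
  have hcast : ((∫ x in (0:ℝ)..1, x ^ (p-1) * (1-x) ^ (q-1) : ℝ) : ℂ)
      = Complex.betaIntegral p q := by
    rw [Complex.betaIntegral, ← intervalIntegral.integral_ofReal]
    refine intervalIntegral.integral_congr (fun x hx => ?_)
    rw [Set.uIcc_of_le (by norm_num : (0:ℝ) ≤ 1)] at hx
    push_cast
    rw [Complex.ofReal_cpow hx.1, Complex.ofReal_cpow (by linarith [hx.2] : (0:ℝ) ≤ 1 - x)]
    push_cast
    ring
  have : ((∫ x in (0:ℝ)..1, x ^ (p-1) * (1-x) ^ (q-1) : ℝ) : ℂ)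
      = ((Real.Gamma p * Real.Gamma q / Real.Gamma (p+q) : ℝ) : ℂ) := by
    rw [hcast, hbeta]
    push_cast [← Complex.Gamma_ofReal]
    norm_num
  exact_mod_cast this

/-- The Mellin-type Beta integral on `(0,∞)`. -/
lemma beta_Ioi {p q : ℝ} (hp : 0 < p) (hpq : p < q) :
    ∫ v in Set.Ioi (0:ℝ), v ^ (p-1) * (1+v) ^ (-q)
      = Real.Gamma p * Real.Gamma (q-p) / Real.Gamma q := by
  have himg : (fun v : ℝ => v / (1+v)) '' Set.Ioi 0 = Set.Ioo 0 1 := by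
    ext x
    constructor
    · rintro ⟨v, hv, rfl⟩
      have hv0 : (0:ℝ) < v := Set.mem_Ioi.mp hv
      have hv' : (0:ℝ) < 1 + v := by linarith
      constructor
      · exact div_pos hv0 hv'
      · rw [div_lt_one hv']; linarith
    · rintro ⟨hx0, hx1⟩
      have h1x : (0:ℝ) < 1 - x := by linarith
      refine ⟨x / (1-x), Set.mem_Ioi.mpr (by positivity), ?_⟩
      field_simp
      ring
  have hderiv : ∀ v ∈ Set.Ioi (0:ℝ),
      HasDerivWithinAt (fun v : ℝ => v / (1+v)) ((1+v)^(-2:ℝ)) (Set.Ioi 0) v := by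
    intro v hv
    have hv' : (1:ℝ) + v ≠ 0 := by have := Set.mem_Ioi.mp hv; positivity
    have : HasDerivAt (fun v : ℝ => v / (1+v)) ((1*(1+v) - v*(0+1))/(1+v)^2) v :=
      (hasDerivAt_id v).div ((hasDerivAt_const v 1).add (hasDerivAt_id v)) hv'
    refine this.hasDerivWithinAt.congr_deriv ?_
    have hv0 : (0:ℝ) < 1 + v := by have := Set.mem_Ioi.mp hv; linarith
    rw [Real.rpow_neg hv0.le, Real.rpow_two]
    field_simp
    ring
  have hinj : Set.InjOn (fun v : ℝ => v / (1+v)) (Set.Ioi 0) := by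
    intro a ha b hb hab
    have ha' : (0:ℝ) < 1 + a := by have := Set.mem_Ioi.mp ha; linarith
    have hb' : (0:ℝ) < 1 + b := by have := Set.mem_Ioi.mp hb; linarith
    field_simp at hab
    linarith
  have key := MeasureTheory.integral_image_eq_integral_abs_deriv_smul
    measurableSet_Ioi hderiv hinj (fun x => x ^ (p-1) * (1-x) ^ (q-p-1))
  rw [himg] at key
  have lhs_eq : ∫ x in Set.Ioo (0:ℝ) 1, x ^ (p-1) * (1-x) ^ (q-p-1)
      = Real.Gamma p * Real.Gamma (q-p) / Real.Gamma q := by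
    rw [← MeasureTheory.integral_Ioc_eq_integral_Ioo,
      ← intervalIntegral.integral_of_le (by norm_num : (0:ℝ) ≤ 1)]
    have := realBeta_eq hp (by linarith : 0 < q - p)
    rwa [show p + (q - p) = q by ring] at this
  rw [key] at lhs_eq
  rw [← lhs_eq]
  refine setIntegral_congr_fun measurableSet_Ioi (fun v hv => ?_)
  have hv0 : (0:ℝ) < v := Set.mem_Ioi.mp hv
  have hv1 : (0:ℝ) < 1 + v := by linarith
  have h1 : (1:ℝ) - v/(1+v) = (1+v)⁻¹ := by field_simp; ring
  have h2 : |(1+v:ℝ)^(-2:ℝ)| = (1+v)^(-2:ℝ) := abs_of_nonneg (Real.rpow_nonneg hv1.le _)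
  simp only [smul_eq_mul, h1, h2]
  rw [Real.div_rpow hv0.le hv1.le]
  have e1 : ((1+v:ℝ)⁻¹) ^ (q-p-1) = (1+v) ^ (-(q-p-1)) := by
    rw [← Real.rpow_neg_one (1+v), ← Real.rpow_mul hv1.le, neg_one_mul]
  have e2 : v ^ (p-1) / (1+v)^(p-1) = v^(p-1) * (1+v)^(-(p-1)) := by
    rw [Real.rpow_neg hv1.le, div_eq_mul_inv]
  rw [e1, e2, show (-q : ℝ) = -2 + (-(p-1) + -(q-p-1)) by ring,
    Real.rpow_add hv1, Real.rpow_add hv1]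
  ring

lemma integrableOn_rpow_one_add {p q : ℝ} (hp : 0 < p) (hpq : p < q) :
    IntegrableOn (fun v : ℝ => v ^ (p-1) * (1+v) ^ (-q)) (Set.Ioi 0) := by
  have hcont : ContinuousOn (fun v : ℝ => v ^ (p-1) * (1+v) ^ (-q)) (Set.Ioi 0) := by
    apply ContinuousOn.mul
    · exact fun v hv => (Real.continuousAt_rpow_const v _ (Or.inl (ne_of_gt hv))).continuousWithinAt
    · intro v hv
      have : (0:ℝ) < 1 + v := by have := Set.mem_Ioi.mp hv; linarith
      exact ((Real.continuousAt_rpow_const (1+v) (-q) (Or.inl (ne_of_gt this))).comp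
        (by fun_prop)).continuousWithinAt
  have h1 : IntegrableOn (fun v : ℝ => v ^ (p-1) * (1+v) ^ (-q)) (Set.Ioc 0 1) := by
    have hbig : IntegrableOn (fun v : ℝ => v ^ (p-1)) (Set.Ioc (0:ℝ) 1) := by
      have := intervalIntegral.intervalIntegrable_rpow' (a := 0) (b := 1) (r := p-1)
        (by linarith)
      rwa [intervalIntegrable_iff_integrableOn_Ioc_of_le (by norm_num)] at this
    refine hbig.mono' ((hcont.mono ?_).aestronglyMeasurable measurableSet_Ioc) ?_
    · exact fun x hx => hx.1
    · filter_upwards [ae_restrict_mem measurableSet_Ioc] with v hv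
      have hv0 : (0:ℝ) < v := hv.1
      have h1v : (1:ℝ) ≤ 1 + v := by linarith
      rw [Real.norm_eq_abs, abs_mul, abs_of_nonneg (Real.rpow_nonneg hv0.le _),
        abs_of_nonneg (Real.rpow_nonneg (by linarith : (0:ℝ) ≤ 1+v) _)]
      calc v ^ (p-1) * (1+v) ^ (-q) ≤ v ^ (p-1) * 1 := by
            refine mul_le_mul_of_nonneg_left ?_ (Real.rpow_nonneg hv0.le _)
            exact Real.rpow_le_one_of_one_le_of_nonpos h1v (by linarith)
        _ = v ^ (p-1) := mul_one _
  have h2 : IntegrableOn (fun v : ℝ => v ^ (p-1) * (1+v) ^ (-q)) (Set.Ioi 1) := by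
    have hbig : IntegrableOn (fun v : ℝ => v ^ (p-1-q)) (Set.Ioi (1:ℝ)) :=
      integrableOn_Ioi_rpow_of_lt (by linarith) one_pos
    refine hbig.mono' ((hcont.mono ?_).aestronglyMeasurable measurableSet_Ioi) ?_
    · exact fun x hx => show (0:ℝ) < x from lt_trans one_pos hx
    · filter_upwards [ae_restrict_mem measurableSet_Ioi] with v hv
      have hv0 : (0:ℝ) < v := lt_trans one_pos hv
      have h1v : (0:ℝ) < 1 + v := by linarith
      rw [Real.norm_eq_abs, abs_mul, abs_of_nonneg (Real.rpow_nonneg hv0.le _),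
        abs_of_nonneg (Real.rpow_nonneg h1v.le _)]
      calc v ^ (p-1) * (1+v) ^ (-q) ≤ v ^ (p-1) * v ^ (-q) := by
            refine mul_le_mul_of_nonneg_left ?_ (Real.rpow_nonneg hv0.le _)
            exact Real.rpow_le_rpow_of_nonpos hv0 (by linarith) (by linarith)
        _ = v ^ (p-1-q) := by rw [← Real.rpow_add hv0]; ring_nf
  have : Set.Ioi (0:ℝ) = Set.Ioc 0 1 ∪ Set.Ioi 1 := (Set.Ioc_union_Ioi_eq_Ioi (by norm_num)).symm
  rw [this]
  exact h1.union h2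

lemma const_eval {α : ℝ} (hα : α ∈ Set.Ioo (1:ℝ) 2) :
    ∫ v in Set.Ioi (0:ℝ), v ^ (-α) * (v*(2+v)/(1+v)^2)
      = -(π * α / Real.sin (π * α)) := by
  obtain ⟨hα1, hα2⟩ := hα
  set p : ℝ := 2 - α with hp_def
  have hp : 0 < p := by simp [hp_def]; linarith
  have hp1 : p < 1 := by simp [hp_def]; linarith
  have key : ∀ v ∈ Set.Ioi (0:ℝ), v ^ (-α) * (v*(2+v)/(1+v)^2)
      = v ^ (p-1) * (1+v) ^ (-(1:ℝ)) + v ^ (p-1) * (1+v) ^ (-(2:ℝ)) := by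
    intro v hv
    have hv0 : (0:ℝ) < v := Set.mem_Ioi.mp hv
    have h1v : (0:ℝ) < 1 + v := by linarith
    have e0 : v ^ (p-1) = v ^ (-α) * v := by
      rw [show p - 1 = -α + 1 by rw [hp_def]; ring, Real.rpow_add hv0, Real.rpow_one]
    have e1 : (1+v) ^ (-(1:ℝ)) = (1+v)⁻¹ := Real.rpow_neg_one _
    have e2 : (1+v) ^ (-(2:ℝ)) = ((1+v)^2)⁻¹ := by
      rw [← Real.rpow_natCast (1+v) 2, ← Real.rpow_neg h1v.le]; norm_num
    rw [e1, e2, e0]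
    have h2 : ((1+v)^2 : ℝ) ≠ 0 := by positivity
    field_simp
    ring
  rw [setIntegral_congr_fun measurableSet_Ioi key]
  rw [MeasureTheory.integral_add (integrableOn_rpow_one_add hp (by linarith))
    (integrableOn_rpow_one_add hp (by linarith))]
  have v1 : ∫ v in Set.Ioi (0:ℝ), v ^ (p-1) * (1+v) ^ (-(1:ℝ))
      = Real.Gamma p * Real.Gamma (1-p) / Real.Gamma 1 := beta_Ioi hp (by linarith)
  have v2 : ∫ v in Set.Ioi (0:ℝ), v ^ (p-1) * (1+v) ^ (-(2:ℝ))
      = Real.Gamma p * Real.Gamma (2-p) / Real.Gamma 2 := beta_Ioi hp (by linarith)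
  have hrefl : Real.Gamma p * Real.Gamma (1-p) = π / Real.sin (π * p) :=
    Real.Gamma_mul_Gamma_one_sub p
  have hgamma2 : Real.Gamma (2-p) = (1-p) * Real.Gamma (1-p) := by
    have := Real.Gamma_add_one (s := 1-p) (by linarith)
    rwa [show (1-p)+1 = 2-p by ring] at this
  have hsin : Real.sin (π * p) = - Real.sin (π * α) := by
    rw [hp_def, show π * (2 - α) = 2*π - π * α by ring, Real.sin_sub]
    simp [Real.sin_two_pi, Real.cos_two_pi]
  have hsinne : Real.sin (π * α) ≠ 0 := by
    have h1 : Real.sin (π * α - π) > 0 := by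
      apply Real.sin_pos_of_pos_of_lt_pi
      · nlinarith [Real.pi_pos]
      · nlinarith [Real.pi_pos]
    have h2 : Real.sin (π * α) = - Real.sin (π * α - π) := by
      rw [show π * α = (π * α - π) + π by ring, Real.sin_add]
      simp
    rw [h2]
    linarith
  rw [v1, v2, Real.Gamma_one, Real.Gamma_two, div_one, div_one,
    show Real.Gamma p * Real.Gamma (2-p) = (1-p) * (Real.Gamma p * Real.Gamma (1-p)) by
      rw [hgamma2]; ring,
    hrefl, hsin, hp_def]
  field_simp
  ring_nf

lemma F_antitone (μ : Measure ℝ) [IsProbabilityMeasure μ] :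
    Antitone (fun u : ℝ => (μ (Set.Ioi u)).toReal) := by
  intro u v huv
  exact ENNReal.toReal_mono (measure_ne_top μ _) (measure_mono (Set.Ioi_subset_Ioi huv))

lemma F_meas (μ : Measure ℝ) [IsProbabilityMeasure μ] :
    Measurable (fun u : ℝ => (μ (Set.Ioi u)).toReal) :=
  (F_antitone μ).measurable

lemma F_le_one (μ : Measure ℝ) [IsProbabilityMeasure μ] (u : ℝ) :
    (μ (Set.Ioi u)).toReal ≤ 1 := by
  rw [show (1:ℝ) = (μ Set.univ).toReal by simp]
  exact ENNReal.toReal_mono (measure_ne_top μ _) (measure_mono (Set.subset_univ _))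

lemma F_nonneg (μ : Measure ℝ) (u : ℝ) : 0 ≤ (μ (Set.Ioi u)).toReal := ENNReal.toReal_nonneg

lemma layercake (μ : Measure ℝ) [IsProbabilityMeasure μ] (hsupp : μ (Set.Iio 0) = 0)
    (hm1 : Integrable (fun t : ℝ => t) μ) {s : ℝ} (hs : 0 < s) :
    ∫ t, t^2/(1+s*t) ∂μ
      = ∫ u in Set.Ioi (0:ℝ),
          (μ (Set.Ioi u)).toReal * ((2*u+s*u^2)/(1+s*u)^2) := by
  have hae : ∀ᵐ t ∂μ, 0 ≤ t := by
    rw [ae_iff]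
    simpa [Set.Iio, not_le] using hsupp
  set g : ℝ → ℝ := fun u => (2*u+s*u^2)/(1+s*u)^2 with hg
  have g_mble : Measurable g := by
    apply Measurable.div <;> fun_prop
  have g_nn : ∀ u : ℝ, 0 ≤ u → 0 ≤ g u := by
    intro u hu
    have h1 : (0:ℝ) < 1 + s*u := by nlinarith
    apply div_nonneg (by nlinarith) (by positivity)
  have g_contOn : ∀ t : ℝ, 0 ≤ t → ContinuousOn g (Set.uIcc 0 t) := by
    intro t ht
    rw [Set.uIcc_of_le ht]
    intro u hu
    have h1 : (0:ℝ) < 1 + s*u := by nlinarith [hu.1]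
    apply ContinuousWithinAt.div (Continuous.continuousWithinAt (by fun_prop))
      (Continuous.continuousWithinAt (by fun_prop))
    positivity
  have g_intble : ∀ t > (0:ℝ), IntervalIntegrable g volume 0 t := by
    intro t ht
    exact (g_contOn t ht.le).intervalIntegrable
  have ftc : ∀ t : ℝ, 0 ≤ t → ∫ u in (0:ℝ)..t, g u = t^2/(1+s*t) := by
    intro t ht
    have hderiv : ∀ u ∈ Set.uIcc (0:ℝ) t, HasDerivAt (fun u : ℝ => u^2/(1+s*u)) (g u) u := by
      intro u hu
      rw [Set.uIcc_of_le ht] at hu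
      have h1 : (0:ℝ) < 1 + s*u := by nlinarith [hu.1]
      have : HasDerivAt (fun u : ℝ => u^2/(1+s*u))
          ((2*u*(1+s*u) - u^2*(0+s*1))/(1+s*u)^2) u := by
        apply HasDerivAt.div
        · simpa using hasDerivAt_pow 2 u
        · exact (hasDerivAt_const u 1).add ((hasDerivAt_id u).const_mul s)
        · positivity
      convert this using 1
      rw [hg]
      field_simp
      ring
    rw [intervalIntegral.integral_eq_sub_of_hasDerivAt hderiv
      ((g_contOn t ht).intervalIntegrable)]
    norm_num
  have key := MeasureTheory.lintegral_comp_eq_lintegral_meas_lt_mul μ (f := fun t => t)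
    hae aemeasurable_id g_intble
    (by filter_upwards [ae_restrict_mem measurableSet_Ioi] with u hu
        exact g_nn u (le_of_lt hu))
  have f_mble : Measurable (fun t : ℝ => t^2/(1+s*t)) := by
    apply Measurable.div <;> fun_prop
  have f_nn : ∀ᵐ t ∂μ, 0 ≤ t^2/(1+s*t) := by
    filter_upwards [hae] with t ht
    have : (0:ℝ) < 1 + s*t := by nlinarith
    positivity
  have lhs_eq : ∫⁻ t, ENNReal.ofReal (∫ u in (0:ℝ)..t, g u) ∂μ
      = ∫⁻ t, ENNReal.ofReal (t^2/(1+s*t)) ∂μ := by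
    apply lintegral_congr_ae
    filter_upwards [hae] with t ht
    rw [ftc t ht]
  have rhs_eq : ∫⁻ u in Set.Ioi (0:ℝ), μ {a : ℝ | u < a} * ENNReal.ofReal (g u)
      = ∫⁻ u in Set.Ioi (0:ℝ), ENNReal.ofReal ((μ (Set.Ioi u)).toReal * g u) := by
    apply setLIntegral_congr_fun measurableSet_Ioi
    intro u hu
    dsimp only
    rw [ENNReal.ofReal_mul (F_nonneg μ u), ENNReal.ofReal_toReal (measure_ne_top μ _)]
    rfl
  rw [lhs_eq, rhs_eq] at key
  rw [MeasureTheory.integral_eq_lintegral_of_nonneg_ae f_nn f_mble.aestronglyMeasurable]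
  rw [MeasureTheory.integral_eq_lintegral_of_nonneg_ae (μ := volume.restrict (Set.Ioi 0))
    (f := fun u => (μ (Set.Ioi u)).toReal * g u) ?_ ?_]
  · rw [key]
  · filter_upwards [ae_restrict_mem measurableSet_Ioi] with u hu
    exact mul_nonneg (F_nonneg μ u) (g_nn u (le_of_lt hu))
  · exact ((F_meas μ).mul g_mble).aestronglyMeasurable

lemma kv_eq {α : ℝ} (hα : α ∈ Set.Ioo (1:ℝ) 2) : ∀ v ∈ Set.Ioi (0:ℝ),
    v ^ (-α) * (v*(2+v)/(1+v)^2)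
      = v ^ ((2-α)-1) * (1+v) ^ (-(1:ℝ)) + v ^ ((2-α)-1) * (1+v) ^ (-(2:ℝ)) := by
  obtain ⟨hα1, hα2⟩ := hα
  intro v hv
  have hv0 : (0:ℝ) < v := Set.mem_Ioi.mp hv
  have h1v : (0:ℝ) < 1 + v := by linarith
  have e0 : v ^ ((2-α)-1) = v ^ (-α) * v := by
    rw [show (2-α) - 1 = -α + 1 by ring, Real.rpow_add hv0, Real.rpow_one]
  have e1 : (1+v) ^ (-(1:ℝ)) = (1+v)⁻¹ := Real.rpow_neg_one _
  have e2 : (1+v) ^ (-(2:ℝ)) = ((1+v)^2)⁻¹ := by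
    rw [← Real.rpow_natCast (1+v) 2, ← Real.rpow_neg h1v.le]; norm_num
  rw [e1, e2, e0]
  have h2 : ((1+v)^2 : ℝ) ≠ 0 := by positivity
  field_simp
  ring

lemma kv_integrableOn {α : ℝ} (hα : α ∈ Set.Ioo (1:ℝ) 2) :
    IntegrableOn (fun v : ℝ => v ^ (-α) * (v*(2+v)/(1+v)^2)) (Set.Ioi 0) := by
  obtain ⟨hα1, hα2⟩ := hα
  have h1 := integrableOn_rpow_one_add (p := 2-α) (q := 1) (by linarith) (by linarith)
  have h2 := integrableOn_rpow_one_add (p := 2-α) (q := 2) (by linarith) (by linarith)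
  refine (h1.add h2).congr ?_
  filter_upwards [ae_restrict_mem measurableSet_Ioi] with v hv
  exact (kv_eq ⟨hα1, hα2⟩ v hv).symm

lemma core_tendsto (μ : Measure ℝ) [IsProbabilityMeasure μ] (hsupp : μ (Set.Iio 0) = 0)
    (hm1 : Integrable (fun t : ℝ => t) μ)
    {α c : ℝ} (hα : α ∈ Set.Ioo (1:ℝ) 2) (hc : 0 < c)
    (htail : Tendsto (fun t : ℝ => (μ (Set.Ioi t)).toReal / (c * t ^ (-α))) atTop (𝓝 1)) :
    Tendsto (fun s : ℝ => s ^ (2-α) * ∫ t, t^2/(1+s*t) ∂μ) (𝓝[>] 0)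
      (𝓝 (c * ∫ v in Set.Ioi (0:ℝ), v ^ (-α) * (v*(2+v)/(1+v)^2))) := by
  obtain ⟨hα1, hα2⟩ := hα
  set F : ℝ → ℝ := fun u => (μ (Set.Ioi u)).toReal with hF
  set k : ℝ → ℝ := fun v => v*(2+v)/(1+v)^2 with hk
  have k_meas : Measurable k := by apply Measurable.div <;> fun_prop
  have k_nn : ∀ v : ℝ, 0 < v → 0 ≤ k v := by
    intro v hv; rw [hk]; positivity
  -- tail bound
  have hT : ∃ T : ℝ, 1 ≤ T ∧ ∀ u : ℝ, T ≤ u → F u ≤ 2*c*u ^ (-α) := by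
    obtain ⟨T₀, hT₀⟩ := eventually_atTop.mp (htail.eventually_lt_const one_lt_two)
    refine ⟨max T₀ 1, le_max_right _ _, fun u hu => ?_⟩
    have hu0 : (0:ℝ) < u := lt_of_lt_of_le one_pos (le_trans (le_max_right _ _) hu)
    have hratio := hT₀ u (le_trans (le_max_left _ _) hu)
    have hpos : 0 < c * u ^ (-α) := by positivity
    calc F u = F u / (c*u ^ (-α)) * (c*u ^ (-α)) := by field_simp
      _ ≤ 2 * (c*u ^ (-α)) := mul_le_mul_of_nonneg_right hratio.le hpos.le
      _ = 2*c*u ^ (-α) := by ring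
  obtain ⟨T, hT1, hTb⟩ := hT
  have hT0 : (0:ℝ) < T := lt_of_lt_of_le one_pos hT1
  set f : ℝ → ℝ → ℝ := fun s v => F (v/s) * (s ^ (-α) * k v) with hf
  -- eventual equality
  have heq : ∀ s : ℝ, 0 < s → s ^ (2-α) * ∫ t, t^2/(1+s*t) ∂μ
      = ∫ v in Set.Ioi (0:ℝ), f s v := by
    intro s hs
    have hs' : (s:ℝ) ≠ 0 := ne_of_gt hs
    rw [layercake μ hsupp hm1 hs]
    have hchg := MeasureTheory.integral_comp_mul_left_Ioi
      (fun u => F u * ((2*u+s*u^2)/(1+s*u)^2)) 0 (inv_pos.mpr hs)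
    simp only [mul_zero, inv_inv, smul_eq_mul] at hchg
    rw [show ∫ u in Set.Ioi (0:ℝ), F u * ((2*u+s*u^2)/(1+s*u)^2)
        = s⁻¹ * ∫ x in Set.Ioi (0:ℝ), F (s⁻¹*x) * ((2*(s⁻¹*x)+s*(s⁻¹*x)^2)/(1+s*(s⁻¹*x))^2)
      from by rw [hchg]; field_simp; exact setIntegral_congr_fun measurableSet_Ioi (fun u _ => by ring)]
    rw [← mul_assoc, ← MeasureTheory.integral_const_mul]
    refine setIntegral_congr_fun measurableSet_Ioi (fun v hv => ?_)
    have hv0 : (0:ℝ) < v := Set.mem_Ioi.mp hv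
    have h1v : (0:ℝ) < 1 + v := by linarith
    have hsv : s * (s⁻¹ * v) = v := by field_simp
    have hpow : s ^ (2-α) * s⁻¹ * s⁻¹ = s ^ (-α) := by
      rw [show -α = (2-α) + (-1) + (-1) by ring, Real.rpow_add hs, Real.rpow_add hs,
        Real.rpow_neg_one]
    have hdiv : v / s = s⁻¹ * v := by rw [div_eq_inv_mul]
    have h1v2 : ((1+v)^2 : ℝ) ≠ 0 := by positivity
    simp only [hf, hk]
    rw [hdiv, hsv, ← hpow]
    field_simp
  set bound : ℝ → ℝ := fun v => 2*c*(v ^ (-α) * k v) with hbound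
  have bound_int : Integrable bound (volume.restrict (Set.Ioi 0)) := by
    exact (kv_integrableOn ⟨hα1, hα2⟩).const_mul _
  have bound_nn : ∀ v : ℝ, 0 < v → 0 ≤ bound v := by
    intro v hv
    have := k_nn v hv
    have : (0:ℝ) ≤ v ^ (-α) := Real.rpow_nonneg hv.le _
    rw [hbound]; positivity
  have f_meas : ∀ s : ℝ, 0 < s → Measurable (f s) := by
    intro s hs
    exact ((F_meas μ).comp (measurable_id.div_const s)).mul (measurable_const.mul k_meas)
  have f_nn : ∀ s : ℝ, 0 < s → ∀ v : ℝ, 0 < v → 0 ≤ f s v := by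
    intro s hs v hv
    have h1 := F_nonneg μ (v/s)
    have h2 : (0:ℝ) ≤ s ^ (-α) := Real.rpow_nonneg hs.le _
    have h3 := k_nn v hv
    rw [hf]; positivity
  have f_bdd : ∀ s : ℝ, 0 < s → ∀ v : ℝ, 0 < v → s*T ≤ v → f s v ≤ bound v := by
    intro s hs v hv hvT
    have hTs : T ≤ v/s := (le_div_iff₀ hs).mpr (by linarith [hvT])
    have hFb : F (v/s) ≤ 2*c*(v/s) ^ (-α) := hTb _ hTs
    have hsre : (0:ℝ) < s ^ (-α) := Real.rpow_pos_of_pos hs _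
    have hdivr : (v/s) ^ (-α) = v ^ (-α) / s ^ (-α) := Real.div_rpow hv.le hs.le (-α)
    have h3 := k_nn v hv
    calc f s v ≤ (2*c*(v/s) ^ (-α)) * (s ^ (-α) * k v) := by
          refine mul_le_mul_of_nonneg_right hFb ?_
          exact mul_nonneg hsre.le h3
      _ = bound v := by
          rw [hdivr, hbound]
          field_simp
  -- A part
  have hA : Tendsto (fun s => ∫ v in Set.Ioi (0:ℝ), Set.indicator (Set.Ici (s*T)) (f s) v)
      (𝓝[>] 0) (𝓝 (∫ v in Set.Ioi (0:ℝ), c * (v ^ (-α) * k v))) := by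
    apply MeasureTheory.tendsto_integral_filter_of_dominated_convergence bound
    · filter_upwards [self_mem_nhdsWithin] with s hs
      exact ((f_meas s hs).indicator measurableSet_Ici).aestronglyMeasurable
    · filter_upwards [self_mem_nhdsWithin] with s hs
      filter_upwards [ae_restrict_mem measurableSet_Ioi] with v hv
      have hv0 : (0:ℝ) < v := Set.mem_Ioi.mp hv
      by_cases hvT : v ∈ Set.Ici (s*T)
      · rw [Set.indicator_of_mem hvT, Real.norm_eq_abs,
          abs_of_nonneg (f_nn s hs v hv0)]
        exact f_bdd s hs v hv0 hvT
      · rw [Set.indicator_of_notMem hvT]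
        simpa using bound_nn v hv0
    · exact bound_int
    · filter_upwards [ae_restrict_mem measurableSet_Ioi] with v hv
      have hv0 : (0:ℝ) < v := Set.mem_Ioi.mp hv
      have hmem : Set.Ioo (0:ℝ) (v/T) ∈ 𝓝[>] (0:ℝ) :=
        Ioo_mem_nhdsGT_of_mem ⟨le_refl 0, by positivity⟩
      have hVs : Tendsto (fun s : ℝ => v/s) (𝓝[>] (0:ℝ)) atTop := by
        simpa [div_eq_mul_inv] using tendsto_inv_nhdsGT_zero.const_mul_atTop hv0
      have hratio : Tendsto (fun s : ℝ => F (v/s) / (c * (v/s) ^ (-α))) (𝓝[>] (0:ℝ)) (𝓝 1) :=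
        htail.comp hVs
      have hmul := hratio.mul_const (c * (v ^ (-α) * k v))
      rw [one_mul] at hmul
      refine Tendsto.congr' ?_ hmul
      filter_upwards [hmem] with s hs'
      obtain ⟨hs0, hsv⟩ := hs'
      have hsT : s*T < v := by
        rw [← lt_div_iff₀ hT0]; exact hsv
      rw [Set.indicator_of_mem (Set.mem_Ici.mpr hsT.le)]
      have hvs0 : (0:ℝ) < v/s := by positivity
      have hdivr : (v/s) ^ (-α) = v ^ (-α) / s ^ (-α) := Real.div_rpow hv0.le hs0.le (-α)
      have hsre : (0:ℝ) < s ^ (-α) := Real.rpow_pos_of_pos hs0 _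
      have hvre : (0:ℝ) < v ^ (-α) := Real.rpow_pos_of_pos hv0 _
      rw [hf, hdivr]
      field_simp
  -- B part
  have hB : Tendsto (fun s => ∫ v in Set.Ioi (0:ℝ), Set.indicator (Set.Iio (s*T)) (f s) v)
      (𝓝[>] 0) (𝓝 0) := by
    have hgoal : ∀ᶠ s in 𝓝[>] (0:ℝ),
        ‖∫ v in Set.Ioi (0:ℝ), Set.indicator (Set.Iio (s*T)) (f s) v‖
          ≤ (fun s => (s ^ (-α)*(s*T*(2+s*T))) * (s*T)) s := by
      filter_upwards [self_mem_nhdsWithin] with s hs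
      rw [MeasureTheory.integral_indicator measurableSet_Iio]
      have hmeaslt : (volume.restrict (Set.Ioi 0)) (Set.Iio (s*T)) = ENNReal.ofReal (s*T) := by
        rw [Measure.restrict_apply measurableSet_Iio, Set.Iio_inter_Ioi, Real.volume_Ioo,
          sub_zero]
      have hb := MeasureTheory.norm_setIntegral_le_of_norm_le_const_ae'
        (μ := volume.restrict (Set.Ioi 0)) (s := Set.Iio (s*T))
        (C := s ^ (-α)*(s*T*(2+s*T))) (f := f s)
        (by rw [hmeaslt]; exact ENNReal.ofReal_lt_top) ?_
      · refine le_trans hb ?_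
        rw [measureReal_def, hmeaslt, ENNReal.toReal_ofReal (mul_pos hs hT0).le]
      · filter_upwards [ae_restrict_mem measurableSet_Ioi] with v hv hvT
        have hv0 : (0:ℝ) < v := Set.mem_Ioi.mp hv
        have hvsT : v < s*T := hvT
        rw [Real.norm_eq_abs, abs_of_nonneg (f_nn s hs v hv0)]
        have hkb : k v ≤ v*(2+v) := by
          rw [hk]
          apply div_le_self (by nlinarith) (by nlinarith)
        have hsre : (0:ℝ) ≤ s ^ (-α) := Real.rpow_nonneg hs.le _
        calc f s v ≤ 1 * (s ^ (-α) * k v) := by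
              refine mul_le_mul_of_nonneg_right (F_le_one μ _) ?_
              exact mul_nonneg hsre (k_nn v hv0)
          _ = s ^ (-α) * k v := one_mul _
          _ ≤ s ^ (-α) * (s*T*(2+s*T)) := by
              refine mul_le_mul_of_nonneg_left ?_ hsre
              calc k v ≤ v*(2+v) := hkb
                _ ≤ s*T*(2+s*T) := by nlinarith
    refine squeeze_zero_norm' hgoal ?_
    have h1 : Tendsto (fun s : ℝ => s ^ (2-α)) (𝓝[>] (0:ℝ)) (𝓝 0) := by
      have hcont := (Real.continuousAt_rpow_const 0 (2-α) (Or.inr (by linarith))).tendsto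
      rw [Real.zero_rpow (by linarith : (2:ℝ)-α ≠ 0)] at hcont
      exact hcont.mono_left nhdsWithin_le_nhds
    have h2 : Tendsto (fun s : ℝ => T*(2+s*T)*T) (𝓝[>] (0:ℝ)) (𝓝 (T*(2+0*T)*T)) := by
      have hcont : Continuous (fun s : ℝ => T*(2+s*T)*T) := by fun_prop
      exact (hcont.tendsto 0).mono_left nhdsWithin_le_nhds
    have hmulz := h1.mul h2
    rw [zero_mul] at hmulz
    refine Tendsto.congr' ?_ hmulz
    filter_upwards [self_mem_nhdsWithin] with s hs
    have hss : s ^ (-α) * s * s = s ^ (2-α) := by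
      rw [show (2:ℝ)-α = -α + 1 + 1 by ring, Real.rpow_add hs, Real.rpow_add hs,
        Real.rpow_one]
    rw [← hss]
    ring
  -- combine
  have intA : ∀ s : ℝ, 0 < s →
      Integrable (Set.indicator (Set.Ici (s*T)) (f s)) (volume.restrict (Set.Ioi 0)) := by
    intro s hs
    refine bound_int.mono' (((f_meas s hs).indicator measurableSet_Ici).aestronglyMeasurable) ?_
    filter_upwards [ae_restrict_mem measurableSet_Ioi] with v hv
    have hv0 : (0:ℝ) < v := Set.mem_Ioi.mp hv
    by_cases hvT : v ∈ Set.Ici (s*T)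
    · rw [Set.indicator_of_mem hvT, Real.norm_eq_abs, abs_of_nonneg (f_nn s hs v hv0)]
      exact f_bdd s hs v hv0 hvT
    · rw [Set.indicator_of_notMem hvT]
      simpa using bound_nn v hv0
  have intB : ∀ s : ℝ, 0 < s →
      Integrable (Set.indicator (Set.Iio (s*T)) (f s)) (volume.restrict (Set.Ioi 0)) := by
    intro s hs
    rw [MeasureTheory.integrable_indicator_iff measurableSet_Iio]
    have hfin : (volume.restrict (Set.Ioi 0)) (Set.Iio (s*T)) < ⊤ := by
      rw [Measure.restrict_apply measurableSet_Iio, Set.Iio_inter_Ioi, Real.volume_Ioo]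
      exact ENNReal.ofReal_lt_top
    refine Integrable.mono' (g := fun _ => s ^ (-α)*(s*T*(2+s*T)))
      (integrableOn_const hfin.ne) ((f_meas s hs).aestronglyMeasurable) ?_
    rw [Measure.restrict_restrict measurableSet_Iio]
    filter_upwards [ae_restrict_mem (measurableSet_Iio.inter measurableSet_Ioi)] with v hv
    obtain ⟨hvT, hv0'⟩ := hv
    have hv0 : (0:ℝ) < v := hv0'
    rw [Real.norm_eq_abs, abs_of_nonneg (f_nn s hs v hv0)]
    have hkb : k v ≤ v*(2+v) := by
      rw [hk]; apply div_le_self (by nlinarith) (by nlinarith)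
    have hsre : (0:ℝ) ≤ s ^ (-α) := Real.rpow_nonneg hs.le _
    calc f s v ≤ 1 * (s ^ (-α) * k v) := by
          refine mul_le_mul_of_nonneg_right (F_le_one μ _) ?_
          exact mul_nonneg hsre (k_nn v hv0)
      _ = s ^ (-α) * k v := one_mul _
      _ ≤ s ^ (-α) * (s*T*(2+s*T)) := by
          refine mul_le_mul_of_nonneg_left ?_ hsre
          calc k v ≤ v*(2+v) := hkb
            _ ≤ s*T*(2+s*T) := by nlinarith [Set.mem_Iio.mp hvT]
  have hsplit : (fun s : ℝ => s ^ (2-α) * ∫ t, t^2/(1+s*t) ∂μ)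
      =ᶠ[𝓝[>] (0:ℝ)] (fun s => (∫ v in Set.Ioi (0:ℝ), Set.indicator (Set.Ici (s*T)) (f s) v)
        + (∫ v in Set.Ioi (0:ℝ), Set.indicator (Set.Iio (s*T)) (f s) v)) := by
    filter_upwards [self_mem_nhdsWithin] with s hs
    rw [heq s hs, ← MeasureTheory.integral_add (intA s hs) (intB s hs)]
    refine setIntegral_congr_fun measurableSet_Ioi (fun v hv => ?_)
    by_cases hvT : v ∈ Set.Iio (s*T)
    · rw [Set.indicator_of_mem hvT,
        Set.indicator_of_notMem (by simpa [Set.mem_Ici, not_le] using Set.mem_Iio.mp hvT),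
        zero_add]
    · rw [Set.indicator_of_notMem hvT,
        Set.indicator_of_mem (Set.mem_Ici.mpr (not_lt.mp (fun h => hvT (Set.mem_Iio.mpr h)))),
        add_zero]
  have hfinal := hA.add hB
  rw [add_zero] at hfinal
  have hdone := Tendsto.congr' hsplit.symm hfinal
  rwa [MeasureTheory.integral_const_mul] at hdone

/-- The moment transform `ψ_μ(z) = ∫ z t / (1 - z t) dμ(t)` of a measure on `ℝ`. -/
noncomputable def psi (μ : Measure ℝ) (z : ℝ) : ℝ := ∫ t, z * t / (1 - z * t) ∂μ

lemma ae_nonneg_of_supp (μ : Measure ℝ) (hsupp : μ (Set.Iio 0) = 0) : ∀ᵐ t ∂μ, 0 ≤ t := by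
  rw [ae_iff]
  simpa [Set.Iio, not_le] using hsupp

lemma int_sq_div (μ : Measure ℝ) [IsProbabilityMeasure μ] (hsupp : μ (Set.Iio 0) = 0)
    (hm1 : Integrable (fun t : ℝ => t) μ) {s : ℝ} (hs : 0 < s) :
    Integrable (fun t : ℝ => t^2/(1+s*t)) μ := by
  refine (hm1.const_mul s⁻¹).mono'
    ((Measurable.div (by fun_prop) (by fun_prop)).aestronglyMeasurable) ?_
  filter_upwards [ae_nonneg_of_supp μ hsupp] with t ht
  have h1 : (0:ℝ) < 1 + s*t := by nlinarith
  rw [Real.norm_eq_abs, abs_of_nonneg (by positivity)]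
  rw [div_le_iff₀ h1]
  have he : s⁻¹ * t * (1 + s*t) = s⁻¹ * t + t^2 := by field_simp
  rw [he]
  nlinarith [mul_nonneg (inv_nonneg.mpr hs.le) ht]

lemma mu_pos_of_mean (μ : Measure ℝ) [IsProbabilityMeasure μ] (hsupp : μ (Set.Iio 0) = 0)
    (hm1 : Integrable (fun t : ℝ => t) μ) (hmean : ∫ t, t ∂μ = 1) :
    0 < μ (Set.Ioi 0) := by
  by_contra h0
  push_neg at h0
  have h0' : μ (Set.Ioi 0) = 0 := le_antisymm (by simpa using h0) zero_le
  have hz : (fun t : ℝ => t) =ᵐ[μ] (fun _ => 0) := by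
    rw [Filter.EventuallyEq, ae_iff]
    refine measure_mono_null (t := Set.Iio 0 ∪ Set.Ioi 0) (fun t ht => ?_) ?_
    · simp only [Set.mem_setOf_eq] at ht
      rcases lt_trichotomy t 0 with h | h | h
      · exact Or.inl h
      · exact absurd h ht
      · exact Or.inr h
    · exact le_antisymm ((measure_union_le _ _).trans (by simp [hsupp, h0'])) zero_le
  have := MeasureTheory.integral_congr_ae hz
  rw [hmean] at this
  simp at this

lemma sJ_lt_one (μ : Measure ℝ) [IsProbabilityMeasure μ] (hsupp : μ (Set.Iio 0) = 0)
    (hm1 : Integrable (fun t : ℝ => t) μ) (hmean : ∫ t, t ∂μ = 1) {s : ℝ} (hs : 0 < s) :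
    s * ∫ t, t^2/(1+s*t) ∂μ < 1 := by
  have hw_int : Integrable (fun t : ℝ => t/(1+s*t)) μ := by
    refine hm1.mono' ((Measurable.div (by fun_prop) (by fun_prop)).aestronglyMeasurable) ?_
    filter_upwards [ae_nonneg_of_supp μ hsupp] with t ht
    have h1 : (1:ℝ) ≤ 1 + s*t := by nlinarith
    have h0 : (0:ℝ) < 1 + s*t := by nlinarith
    rw [Real.norm_eq_abs, abs_of_nonneg (by positivity : (0:ℝ) ≤ t/(1+s*t))]
    exact div_le_self ht h1
  have hw_pos : 0 < ∫ t, t/(1+s*t) ∂μ := by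
    rw [MeasureTheory.integral_pos_iff_support_of_nonneg_ae ?_ hw_int]
    · refine lt_of_lt_of_le (mu_pos_of_mean μ hsupp hm1 hmean) (measure_mono ?_)
      intro t ht
      have ht0 : (0:ℝ) < t := ht
      have h1 : (0:ℝ) < 1 + s*t := by nlinarith
      simp only [Function.mem_support]
      positivity
    · filter_upwards [ae_nonneg_of_supp μ hsupp] with t ht
      have h1 : (0:ℝ) < 1 + s*t := by nlinarith
      positivity
  have hw_eq : ∫ t, t/(1+s*t) ∂μ = 1 - s * ∫ t, t^2/(1+s*t) ∂μ := by
    have heq : (fun t : ℝ => t/(1+s*t)) =ᵐ[μ] (fun t => t - s * (t^2/(1+s*t))) := by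
      filter_upwards [ae_nonneg_of_supp μ hsupp] with t ht
      have h1 : (0:ℝ) < 1 + s*t := by nlinarith
      field_simp
      ring
    rw [MeasureTheory.integral_congr_ae heq,
      MeasureTheory.integral_sub hm1 ((int_sq_div μ hsupp hm1 hs).const_mul s), hmean,
      MeasureTheory.integral_const_mul]
  linarith [hw_pos, hw_eq.symm.le]

lemma psi_eq_aux (μ : Measure ℝ) [IsProbabilityMeasure μ] (hsupp : μ (Set.Iio 0) = 0)
    (hm1 : Integrable (fun t : ℝ => t) μ) (hmean : ∫ t, t ∂μ = 1) {z : ℝ} (hz : z < 0) :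
    psi μ z = z + z^2 * ∫ t, t^2/(1+(-z)*t) ∂μ := by
  have hs : (0:ℝ) < -z := by linarith
  have heq : (fun t : ℝ => z*t/(1-z*t)) =ᵐ[μ]
      (fun t => z*t + z^2 * (t^2/(1+(-z)*t))) := by
    filter_upwards [ae_nonneg_of_supp μ hsupp] with t ht
    have h1 : (0:ℝ) < 1 - z*t := by nlinarith
    have h1'' : (1:ℝ) - z*t ≠ 0 := ne_of_gt h1
    have h2 : (1:ℝ) + (-z)*t = 1 - z*t := by ring
    rw [h2, ← mul_div_assoc, add_div' _ _ _ h1'',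
      show z*t*(1-z*t) + z^2*t^2 = z*t from by ring]
  rw [psi, MeasureTheory.integral_congr_ae heq,
    MeasureTheory.integral_add (hm1.const_mul z)
      ((int_sq_div μ hsupp hm1 hs).const_mul (z^2)),
    MeasureTheory.integral_const_mul, MeasureTheory.integral_const_mul, hmean, mul_one]

/-- For a probability measure `μ` on `[0,∞)` with `m₁(μ) = 1` and regularly varying
tail `μ((t,∞)) ~ c t^{-α}`, `α ∈ (1,2)`, `c > 0`:
`(1/ψ_μ(z) - 1/z)/(-z)^{α-2} → cπα/sin(πα)` as `z → 0-`. -/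
theorem psi_inverse_expansion_heavy_tail
    (μ : Measure ℝ) [IsProbabilityMeasure μ] (hsupp : μ (Set.Iio 0) = 0)
    (hm1 : Integrable (fun t : ℝ => t) μ) (hmean : ∫ t, t ∂μ = 1)
    (α c : ℝ) (hα : α ∈ Set.Ioo (1 : ℝ) 2) (hc : 0 < c)
    (htail : Tendsto (fun t : ℝ => (μ (Set.Ioi t)).toReal / (c * t ^ (-α))) atTop (𝓝 1)) :
    Tendsto (fun z : ℝ => ((psi μ z)⁻¹ - z⁻¹) / (-z) ^ (α - 2))
      (𝓝[<] 0) (𝓝 (c * π * α / Real.sin (π * α))) := by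
  obtain ⟨hα1, hα2⟩ := hα
  have hcore := core_tendsto μ hsupp hm1 ⟨hα1, hα2⟩ hc htail
  have hneg : Tendsto (fun z : ℝ => -z) (𝓝[<] (0:ℝ)) (𝓝[>] (0:ℝ)) := by
    apply tendsto_nhdsWithin_of_tendsto_nhds_of_eventually_within
    · have := (continuous_neg.tendsto (0:ℝ)).mono_left (nhdsWithin_le_nhds (s := Set.Iio 0))
      simpa using this
    · filter_upwards [self_mem_nhdsWithin] with z hz
      simpa using Set.mem_Iio.mp hz
  have hJcomp : Tendsto (fun z : ℝ => (-z) ^ (2-α) * ∫ t, t^2/(1+(-z)*t) ∂μ) (𝓝[<] (0:ℝ))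
      (𝓝 (c * ∫ v in Set.Ioi (0:ℝ), v ^ (-α) * (v*(2+v)/(1+v)^2))) := hcore.comp hneg
  have h1 : Tendsto (fun z : ℝ => (-z) ^ (α-1)) (𝓝[<] (0:ℝ)) (𝓝 0) := by
    have hcont := (Real.continuousAt_rpow_const 0 (α-1) (Or.inr (by linarith))).tendsto
    rw [Real.zero_rpow (by intro h; linarith [sub_eq_zero.mp h] : α-(1:ℝ) ≠ 0)] at hcont
    exact hcont.comp (hneg.mono_right nhdsWithin_le_nhds)
  have hzJ : Tendsto (fun z : ℝ => z * ∫ t, t^2/(1+(-z)*t) ∂μ) (𝓝[<] (0:ℝ)) (𝓝 0) := by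
    have hm := h1.mul hJcomp
    rw [zero_mul] at hm
    have hm' := hm.neg
    rw [neg_zero] at hm'
    refine Tendsto.congr' ?_ hm'
    filter_upwards [self_mem_nhdsWithin] with z hz
    have hz0 : (0:ℝ) < -z := neg_pos.mpr (Set.mem_Iio.mp hz)
    rw [← mul_assoc, ← Real.rpow_add hz0, show α-1+(2-α) = (1:ℝ) by ring, Real.rpow_one]
    ring
  have hpsi_facts : ∀ z : ℝ, z < 0 →
      psi μ z < 0 ∧ 0 < 1 + z * ∫ t, t^2/(1+(-z)*t) ∂μ := by
    intro z hz
    have hs : (0:ℝ) < -z := neg_pos.mpr hz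
    have hlt := sJ_lt_one μ hsupp hm1 hmean hs
    have hid : z * ∫ t, t^2/(1+(-z)*t) ∂μ = -(-z * ∫ t, t^2/(1+(-z)*t) ∂μ) := by ring
    have hpos : 0 < 1 + z * ∫ t, t^2/(1+(-z)*t) ∂μ := by
      rw [hid]; linarith [hlt]
    refine ⟨?_, hpos⟩
    rw [psi_eq_aux μ hsupp hm1 hmean hz,
      show z + z^2 * ∫ t, t^2/(1+(-z)*t) ∂μ = z * (1 + z * ∫ t, t^2/(1+(-z)*t) ∂μ) by ring]
    exact mul_neg_of_neg_of_pos hz hpos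
  have hratio : Tendsto (fun z : ℝ => z / psi μ z) (𝓝[<] (0:ℝ)) (𝓝 1) := by
    have hden : Tendsto (fun z : ℝ => 1 + z * ∫ t, t^2/(1+(-z)*t) ∂μ) (𝓝[<] (0:ℝ)) (𝓝 1) := by
      have := (tendsto_const_nhds (x := (1:ℝ)) (f := 𝓝[<] (0:ℝ))).add hzJ
      simpa using this
    have hinv := hden.inv₀ (by norm_num)
    rw [inv_one] at hinv
    refine Tendsto.congr' ?_ hinv
    filter_upwards [self_mem_nhdsWithin] with z hz
    have hz' : z < 0 := Set.mem_Iio.mp hz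
    have hzne : z ≠ 0 := ne_of_lt hz'
    rw [psi_eq_aux μ hsupp hm1 hmean hz',
      show z + z^2 * ∫ t, t^2/(1+(-z)*t) ∂μ = z * (1 + z * ∫ t, t^2/(1+(-z)*t) ∂μ) by ring,
      div_mul_cancel_left₀ hzne]
  have hRHS := hratio.mul hJcomp.neg
  rw [one_mul] at hRHS
  have hconst : -(c * ∫ v in Set.Ioi (0:ℝ), v ^ (-α) * (v*(2+v)/(1+v)^2))
      = c * π * α / Real.sin (π * α) := by
    rw [const_eval ⟨hα1, hα2⟩]
    ring
  rw [hconst] at hRHS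
  refine Tendsto.congr' ?_ hRHS
  filter_upwards [self_mem_nhdsWithin] with z hz
  have hz' : z < 0 := Set.mem_Iio.mp hz
  obtain ⟨hψ, hpos⟩ := hpsi_facts z hz'
  have hψne : psi μ z ≠ 0 := ne_of_lt hψ
  have hzne : z ≠ 0 := ne_of_lt hz'
  have hsz : (0:ℝ) < -z := neg_pos.mpr hz'
  have hpe := psi_eq_aux μ hsupp hm1 hmean hz'
  have hAe : (-z) ^ (α-2) = ((-z) ^ (2-α))⁻¹ := by
    rw [show α-2 = -(2-α) by ring, Real.rpow_neg hsz.le]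
  have hApos : (0:ℝ) < (-z) ^ (2-α) := Real.rpow_pos_of_pos hsz _
  have hAne : (-z) ^ (2-α) ≠ 0 := ne_of_gt hApos
  rw [hAe]
  generalize hgen : (∫ t, t^2/(1+(-z)*t) ∂μ) = Jv at hpe ⊢
  generalize hgenA : (-z) ^ ((2:ℝ)-α) = Av at hAne ⊢
  have hψne' : z + z^2 * Jv ≠ 0 := by rw [← hpe]; exact hψne
  have h1ne : 1 + z * Jv ≠ 0 := by rw [← hgen]; exact ne_of_gt hpos
  rw [hpe,
    show ∀ a b : ℝ, a / b⁻¹ = a * b from fun a b => by rw [div_eq_mul_inv, inv_inv]]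
  field_simp
  ring
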